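/- arXiv:2010.01772 — 4 statements merged into one kernel-verified Lean document; each statement's English description precedes it below -/
import Mathlib

section
/- Suppose Y is square-integrable and η₁ : ℝ^p → ℝ is a measurable function with η₁(X) square-integrable such that E[D·Y | σ(X)] = δ·η₁(X) almost surely and E[1{D=1} | σ(X)] = δ almost surely. Let θ₁ = E[D·Y]/δ. Then E[ (D/δ)·(Y − θ₁)·(η₁(X) − θ₁) ] = E[ (η₁(X) − θ₁)² ]. -/
/-!
Write `g = η₁(X) − θ₁`. Since `g` is `σ(X)`-measurable, `E[g·Z] = E[g·E[Z | σ(X)]]` for square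
integrable `Z`; applied to `Z = D(Y − θ₁)`, whose conditional expectation is `δ(η₁(X) − θ₁)` by the
two hypotheses on `E[D·Y | σ(X)]` and `E[D | σ(X)]`, this turns the left side into `E[g²]`.
-/

open MeasureTheory

namespace MeasureTheory

variable {Ω : Type*} {m m₀ : MeasurableSpace Ω} {μ : Measure Ω}

theorem integral_mul_eq_integral_mul_condExp (hm : m ≤ m₀) [SigmaFinite (μ.trim hm)]
    {f g : Ω → ℝ} (hg : AEStronglyMeasurable[m] g μ) (hgf : Integrable (g * f) μ)
    (hf : Integrable f μ) :
    ∫ ω, g ω * f ω ∂μ = ∫ ω, g ω * (μ[f|m]) ω ∂μ :=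
  calc ∫ ω, g ω * f ω ∂μ = ∫ ω, (μ[g * f|m]) ω ∂μ := (integral_condExp hm).symm
    _ = ∫ ω, g ω * (μ[f|m]) ω ∂μ :=
      integral_congr_ae (condExp_mul_of_aestronglyMeasurable_left hg hgf hf)

theorem condExp_mul_sub_const_ae_eq {D Y η : Ω → ℝ} {δ θ : ℝ} (hD : Integrable D μ)
    (hDY : Integrable (fun ω => D ω * Y ω) μ)
    (hcondDY : μ[fun ω => D ω * Y ω|m] =ᵐ[μ] fun ω => δ * η ω)
    (hcondD : μ[D|m] =ᵐ[μ] fun _ => δ) :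
    μ[fun ω => D ω * (Y ω - θ)|m] =ᵐ[μ] fun ω => δ * (η ω - θ) := by
  have hsplit : (fun ω => D ω * (Y ω - θ)) = (fun ω => D ω * Y ω) - θ • D := by
    ext ω; simp only [Pi.sub_apply, Pi.smul_apply, smul_eq_mul]; ring
  rw [hsplit]
  filter_upwards [condExp_sub hDY (hD.smul θ) m, condExp_smul θ D m, hcondDY, hcondD]
    with ω hsub hsmul hDYω hDω
  rw [hsub, Pi.sub_apply, hsmul, Pi.smul_apply, hDYω, hDω, smul_eq_mul]
  ring

theorem integral_div_mul_sub_mul_eq_integral_mul_sub [IsFiniteMeasure μ] (hm : m ≤ m₀)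
    {D Y η g : Ω → ℝ} {δ θ : ℝ} (hδ : δ ≠ 0) (hg : AEStronglyMeasurable[m] g μ)
    (hg2 : MemLp g 2 μ) (hD : MemLp D ⊤ μ) (hY : MemLp Y 2 μ)
    (hcondDY : μ[fun ω => D ω * Y ω|m] =ᵐ[μ] fun ω => δ * η ω)
    (hcondD : μ[D|m] =ᵐ[μ] fun _ => δ) :
    ∫ ω, D ω / δ * (Y ω - θ) * g ω ∂μ = ∫ ω, g ω * (η ω - θ) ∂μ := by
  have hDYθ : MemLp (fun ω => D ω * (Y ω - θ)) 2 μ := (hY.sub (memLp_const θ)).mul' hD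
  have hcond : μ[fun ω => D ω * (Y ω - θ)|m] =ᵐ[μ] fun ω => δ * (η ω - θ) :=
    condExp_mul_sub_const_ae_eq (hD.integrable le_top)
      ((hY.mul' hD).integrable one_le_two) hcondDY hcondD
  calc ∫ ω, D ω / δ * (Y ω - θ) * g ω ∂μ = δ⁻¹ * ∫ ω, g ω * (D ω * (Y ω - θ)) ∂μ := by
        rw [← integral_const_mul]; congr 1 with ω; field_simp
    _ = δ⁻¹ * ∫ ω, g ω * (δ * (η ω - θ)) ∂μ := by
        rw [integral_mul_eq_integral_mul_condExp hm hg (hg2.integrable_mul hDYθ)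
          (hDYθ.integrable one_le_two), integral_congr_ae (hcond.mono fun ω h => by rw [h])]
    _ = ∫ ω, g ω * (η ω - θ) ∂μ := by
        rw [← integral_const_mul]; congr 1 with ω; field_simp

end MeasureTheory

theorem efficient_score_cross_moment_identity_general
    {Ω : Type*} [MeasurableSpace Ω] (μ : Measure Ω) [IsProbabilityMeasure μ]
    {p : ℕ}
    (D : Ω → ℝ) (X : Ω → EuclideanSpace ℝ (Fin p)) (Y : Ω → ℝ)
    (hDm : Measurable D) (hXm : Measurable X)
    (hD01 : ∀ ω, D ω = 0 ∨ D ω = 1)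
    (δ : ℝ)
    (hδ0 : 0 < δ)
    (hY2 : MemLp Y 2 μ)
    (η1 : EuclideanSpace ℝ (Fin p) → ℝ) (hη1m : Measurable η1)
    (hη12 : MemLp (fun ω => η1 (X ω)) 2 μ)
    (hcond1 : (μ[fun ω => D ω * Y ω | MeasurableSpace.comap X inferInstance])
        =ᵐ[μ] fun ω => δ * η1 (X ω))
    (hcondD : (μ[D | MeasurableSpace.comap X inferInstance]) =ᵐ[μ] fun _ => δ)
    (θ1 : ℝ) :
    ∫ ω, D ω / δ * (Y ω - θ1) * (η1 (X ω) - θ1) ∂μ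
      = ∫ ω, (η1 (X ω) - θ1) ^ 2 ∂μ := by
  have hD : MemLp D ⊤ μ :=
    memLp_top_of_bound hDm.aestronglyMeasurable 1 <| ae_of_all _ fun ω => by
      rcases hD01 ω with h | h <;> simp [h]
  have hg : AEStronglyMeasurable[MeasurableSpace.comap X inferInstance]
      (fun ω => η1 (X ω) - θ1) μ :=
    ((hη1m.comp (comap_measurable X)).sub_const θ1).aestronglyMeasurable
  rw [integral_div_mul_sub_mul_eq_integral_mul_sub hXm.comap_le hδ0.ne' hg
    (hη12.sub (memLp_const θ1)) hD hY2 hcond1 hcondD]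
  simp_rw [sq]

/-- **Key cross-moment identity in the proof of asymptotic normality.**
If `E[D·Y | σ(X)] = δ·η₁(X)` a.s. and `E[1{D=1} | σ(X)] = δ` a.s., then with
`θ₁ = E[D·Y]/δ` one has `E[(D/δ)(Y − θ₁)(η₁(X) − θ₁)] = E[(η₁(X) − θ₁)²]`. -/
theorem efficient_score_cross_moment_identity
    {Ω : Type*} [MeasurableSpace Ω] (μ : Measure Ω) [IsProbabilityMeasure μ]
    {p : ℕ}
    (D : Ω → ℝ) (X : Ω → EuclideanSpace ℝ (Fin p)) (Y : Ω → ℝ)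
    (hDm : Measurable D) (hXm : Measurable X) (hYm : Measurable Y)
    (hD01 : ∀ ω, D ω = 0 ∨ D ω = 1)
    (δ : ℝ) (hδ : δ = (μ {ω | D ω = 1}).toReal)
    (hδ0 : 0 < δ) (hδ1 : δ < 1)
    (hY2 : MemLp Y 2 μ)
    (η1 : EuclideanSpace ℝ (Fin p) → ℝ) (hη1m : Measurable η1)
    (hη12 : MemLp (fun ω => η1 (X ω)) 2 μ)
    (hcond1 : (μ[fun ω => D ω * Y ω | MeasurableSpace.comap X inferInstance])
        =ᵐ[μ] fun ω => δ * η1 (X ω))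
    (hcondD : (μ[D | MeasurableSpace.comap X inferInstance]) =ᵐ[μ] fun _ => δ)
    (θ1 : ℝ) (hθ1 : θ1 = (∫ ω, D ω * Y ω ∂μ) / δ) :
    ∫ ω, D ω / δ * (Y ω - θ1) * (η1 (X ω) - θ1) ∂μ
      = ∫ ω, (η1 (X ω) - θ1) ^ 2 ∂μ :=
  efficient_score_cross_moment_identity_general μ D X Y hDm hXm hD01 δ hδ0 hY2 η1 hη1m hη12 hcond1
    hcondD θ1
end

section
/- Let g₁, …, g_m be vectors in ℝ^r and let λ ∈ ℝ^r satisfy 1 + ⟨λ, g_i⟩ > 0 for all i and the score equation (1/m)·∑_{i=1}^m g_i/(1 + ⟨λ, g_i⟩) = 0. Define p_i = 1/(m·(1 + ⟨λ, g_i⟩)) for i = 1, …, m. Then: (i) p_i > 0 for all i, ∑_{i=1}^m p_i = 1, and ∑_{i=1}^m p_i·g_i = 0; (ii) for any q₁, …, q_m > 0 with ∑_{i=1}^m q_i = 1 and ∑_{i=1}^m q_i·g_i = 0, one has ∑_{i=1}^m log q_i ≤ ∑_{i=1}^m log p_i. That is, the weights p_i maximize the empirical log-likelihood subject to the normalization and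 moment constraints. -/
open scoped RealInnerProductSpace
open Finset

/-!
Write `cᵢ = 1 + ⟪λ, gᵢ⟫`. Pairing a moment constraint `∑ wᵢ • gᵢ = 0` with `λ` gives
`∑ wᵢ cᵢ = ∑ wᵢ`. Since `pᵢ cᵢ = 1/m`, this yields `∑ pᵢ = 1`, and for any feasible `q` it yields
`∑ qᵢ / pᵢ = m ∑ qᵢ cᵢ = m`. Summing `log (qᵢ / pᵢ) ≤ qᵢ / pᵢ - 1` then gives
`∑ log qᵢ - ∑ log pᵢ ≤ m - m = 0`.
-/

section

variable {ι E : Type*} [Fintype ι] [NormedAddCommGroup E] [InnerProductSpace ℝ E]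

theorem sum_mul_one_add_inner_eq_sum {w : ι → ℝ} {g : ι → E} (lam : E)
    (hw : ∑ i, w i • g i = 0) :
    ∑ i, w i * (1 + ⟪lam, g i⟫) = ∑ i, w i := by
  have hinner : ∑ i, w i * ⟪lam, g i⟫ = 0 := by
    simpa only [inner_sum, real_inner_smul_right, inner_zero_right] using
      congrArg (⟪lam, ·⟫) hw
  simp only [mul_add, mul_one, sum_add_distrib, hinner, add_zero]

end

theorem sum_log_le_sum_log_of_sum_div_le_card {ι : Type*} [Fintype ι] {p q : ι → ℝ}
    (hp : ∀ i, 0 < p i) (hq : ∀ i, 0 < q i) (hratio : ∑ i, q i / p i ≤ Fintype.card ι) :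
    ∑ i, Real.log (q i) ≤ ∑ i, Real.log (p i) := by
  have hlog : ∀ i, Real.log (q i) - Real.log (p i) ≤ q i / p i - 1 := fun i => by
    rw [← Real.log_div (hq i).ne' (hp i).ne']
    exact Real.log_le_sub_one_of_pos (div_pos (hq i) (hp i))
  have hsum := sum_le_sum fun i (_ : i ∈ univ) => hlog i
  simp only [sum_sub_distrib, sum_const, card_univ, nsmul_eq_mul, mul_one] at hsum
  linarith

/-- **Lagrange-dual representation of the empirical likelihood weights.**
If `λ` satisfies `1 + ⟨λ, gᵢ⟩ > 0` for all `i` and the score equation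
`(1/m)·∑ᵢ gᵢ/(1 + ⟨λ, gᵢ⟩) = 0`, then the weights `pᵢ = 1/(m(1 + ⟨λ, gᵢ⟩))` are positive,
sum to one, satisfy the moment constraint `∑ᵢ pᵢ gᵢ = 0`, and maximize the empirical
log-likelihood among all weights satisfying these constraints. -/
theorem el_weights_lagrange_dual
    {r m : ℕ} (hm : 0 < m)
    (g : Fin m → EuclideanSpace ℝ (Fin r)) (lam : EuclideanSpace ℝ (Fin r))
    (hpos : ∀ i, 0 < 1 + ⟪lam, g i⟫)
    (hscore : (1 / (m : ℝ)) • ∑ i, (1 + ⟪lam, g i⟫)⁻¹ • g i = 0)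
    (p : Fin m → ℝ)
    (hp : ∀ i, p i = 1 / (m * (1 + ⟪lam, g i⟫))) :
    (∀ i, 0 < p i) ∧ (∑ i, p i = 1) ∧ (∑ i, p i • g i = 0) ∧
      (∀ q : Fin m → ℝ, (∀ i, 0 < q i) → (∑ i, q i = 1) → (∑ i, q i • g i = 0) →
        ∑ i, Real.log (q i) ≤ ∑ i, Real.log (p i)) := by
  have hm0 : (m : ℝ) ≠ 0 := by positivity
  have hp_pos : ∀ i, 0 < p i := fun i => by rw [hp i]; have := hpos i; positivity
  have hp_moment : ∑ i, p i • g i = 0 := by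
    simpa only [hp, one_div, mul_inv, smul_sum, smul_smul] using hscore
  have hp_mul : ∀ i, p i * (1 + ⟪lam, g i⟫) = 1 / m := fun i => by
    rw [hp i]; field_simp [(hpos i).ne']
  have hp_sum : ∑ i, p i = 1 := by
    rw [← sum_mul_one_add_inner_eq_sum lam hp_moment]
    simp [hp_mul, hm0]
  refine ⟨hp_pos, hp_sum, hp_moment, fun q hq hq_sum hq_moment => ?_⟩
  apply sum_log_le_sum_log_of_sum_div_le_card hp_pos hq
  have hdiv : ∀ i, q i / p i = m * (q i * (1 + ⟪lam, g i⟫)) := fun i => by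
    rw [hp i]; field_simp [(hpos i).ne']
  simp_rw [hdiv, ← mul_sum, sum_mul_one_add_inner_eq_sum lam hq_moment, hq_sum]
  simp
end

section
/- Let g₁, …, g_m be vectors in ℝ^r such that the zero vector lies in the interior of the convex hull of {g₁, …, g_m}. Then there exists a unique λ ∈ ℝ^r satisfying 1 + ⟨λ, g_i⟩ > 0 for all i = 1, …, m and (1/m)·∑_{i=1}^m g_i/(1 + ⟨λ, g_i⟩) = 0. -/
open scoped RealInnerProductSpace
open Finset

/-!
A ball of radius `δ` around `0` inside the convex hull of the `gᵢ` forces, in every direction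
`u`, some `⟪u, gᵢ⟫ ≤ -δ ‖u‖`. Hence the closed region where all `1 + ⟪λ, gᵢ⟫ ≥ 0` is compact,
and the product `∏ᵢ (1 + ⟪λ, gᵢ⟫)` attains its maximum there at a point where every factor is
positive; differentiating along the score direction shows that the score vanishes there.
Uniqueness comes from the identity
`⟪μ - λ, score λ - score μ⟫ = ∑ᵢ ⟪μ - λ, gᵢ⟫² / ((1 + ⟪λ, gᵢ⟫)(1 + ⟪μ, gᵢ⟫))`,
which forces `⟪μ - λ, gᵢ⟫ = 0` for all `i`, and then `μ = λ` by the margin above.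
-/

section

variable {ι E : Type*} [NormedAddCommGroup E] [InnerProductSpace ℝ E]

theorem exists_inner_le_neg_mul_norm_of_closedBall_subset_convexHull {g : ι → E} {δ : ℝ}
    (hball : Metric.closedBall 0 δ ⊆ convexHull ℝ (Set.range g)) (hδ : 0 ≤ δ) (u : E) :
    ∃ i, ⟪u, g i⟫ ≤ -δ * ‖u‖ := by
  by_contra! h
  have hhalf : convexHull ℝ (Set.range g) ⊆ {x | -δ * ‖u‖ < ⟪u, x⟫} :=
    convexHull_min (Set.range_subset_iff.2 h) (convex_halfSpace_gt (innerₛₗ ℝ u).isLinear _)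
  set p : E := -(δ / ‖u‖) • u
  have hp : p ∈ Metric.closedBall 0 δ := by
    rcases eq_or_ne u 0 with rfl | hu
    · simpa [p] using hδ
    · simp [p, norm_smul, abs_of_nonneg hδ, hu]
  have hup : ⟪u, p⟫ = -δ * ‖u‖ := by
    rcases eq_or_ne u 0 with rfl | hu
    · simp
    · rw [real_inner_smul_right, real_inner_self_eq_norm_sq]
      field_simp
  exact (hhalf (hball hp)).ne hup.symm

theorem isBounded_setOf_forall_one_add_inner_nonneg {g : ι → E} {δ : ℝ} (hδ : 0 < δ)
    (hsep : ∀ u, ∃ i, ⟪u, g i⟫ ≤ -δ * ‖u‖) :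
    Bornology.IsBounded {x | ∀ i, 0 ≤ 1 + ⟪x, g i⟫} := by
  refine (Metric.isBounded_closedBall (x := 0) (r := 1 / δ)).subset fun x hx => ?_
  obtain ⟨i, hi⟩ := hsep x
  rw [mem_closedBall_zero_iff, le_div_iff₀' hδ]
  linarith [hx i]

variable [Fintype ι] (g : ι → E)

/-- The exponential of the empirical likelihood dual objective `∑ᵢ log (1 + ⟪λ, gᵢ⟫)`. -/
noncomputable def elDual (x : E) : ℝ := ∏ i, (1 + ⟪x, g i⟫)

/-- The gradient of the dual objective `∑ᵢ log (1 + ⟪λ, gᵢ⟫)`. -/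
noncomputable def elScore (x : E) : E := ∑ i, (1 + ⟪x, g i⟫)⁻¹ • g i

theorem inner_elScore (x v : E) : ⟪v, elScore g x⟫ = ∑ i, (1 + ⟪x, g i⟫)⁻¹ * ⟪v, g i⟫ := by
  simp only [elScore, inner_sum, real_inner_smul_right]

theorem elScore_eq_zero_of_isLocalMax {x : E} (hpos : ∀ i, 0 < 1 + ⟪x, g i⟫)
    (hmax : IsLocalMax (elDual g) x) : elScore g x = 0 := by
  classical
  set S := elScore g x
  have hderiv : HasDerivAt (fun t : ℝ => elDual g (x + t • S))
      (∑ i, (∏ j ∈ univ.erase i, (1 + ⟪x, g j⟫)) * ⟪S, g i⟫) 0 := by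
    have := HasDerivAt.fun_finsetProd (u := univ) (x := (0 : ℝ))
      (f := fun i (t : ℝ) => 1 + ⟪x + t • S, g i⟫) (f' := fun i => ⟪S, g i⟫) fun i _ => by
        simpa [inner_add_left, real_inner_smul_left] using
          ((hasDerivAt_id (0 : ℝ)).mul_const ⟪S, g i⟫).const_add (1 + ⟪x, g i⟫)
    simpa only [elDual, zero_smul, add_zero, smul_eq_mul] using this
  have hlocal : IsLocalMax (fun t : ℝ => elDual g (x + t • S)) 0 :=
    IsLocalMax.comp_continuous (f := elDual g) (g := fun t : ℝ => x + t • S)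
      (by rwa [zero_smul, add_zero]) (by fun_prop)
  have hprod_erase : ∀ i, ∏ j ∈ univ.erase i, (1 + ⟪x, g j⟫) = elDual g x * (1 + ⟪x, g i⟫)⁻¹ :=
    fun i => (eq_mul_inv_iff_mul_eq₀ (hpos i).ne').2 (prod_erase_mul _ _ (mem_univ i))
  have hzero : elDual g x * ⟪S, S⟫ = 0 := by
    rw [inner_elScore, mul_sum, ← hlocal.hasDerivAt_eq_zero hderiv]
    simp only [hprod_erase, mul_assoc]
  have hdual_pos : 0 < elDual g x := prod_pos fun i _ => hpos i
  exact inner_self_eq_zero.1 ((mul_eq_zero.1 hzero).resolve_left hdual_pos.ne')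

theorem exists_elScore_eq_zero [ProperSpace E]
    (hK : Bornology.IsBounded {x | ∀ i, 0 ≤ 1 + ⟪x, g i⟫}) :
    ∃ x, (∀ i, 0 < 1 + ⟪x, g i⟫) ∧ elScore g x = 0 := by
  set K := {x : E | ∀ i, 0 ≤ 1 + ⟪x, g i⟫}
  have hKc : IsCompact K := by
    refine Metric.isCompact_of_isClosed_isBounded ?_ hK
    simp only [K, Set.ofPred_forall]
    exact isClosed_iInter fun i => isClosed_le continuous_const (by fun_prop)
  have hcont : Continuous (elDual g) := by unfold elDual; fun_prop
  obtain ⟨x, hxK, hmax⟩ := hKc.exists_isMaxOn ⟨0, by simp [K]⟩ hcont.continuousOn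
  have hdual : elDual g x ≠ 0 := by
    have h1 : elDual g 0 = 1 := by simp [elDual]
    have : elDual g 0 ≤ elDual g x := hmax (by simp [K])
    exact (zero_lt_one.trans_le (h1 ▸ this)).ne'
  have hpos : ∀ i, 0 < 1 + ⟪x, g i⟫ := fun i =>
    (hxK i).lt_of_ne fun h => hdual (prod_eq_zero (mem_univ i) h.symm)
  have hKx : K ∈ nhds x := by
    filter_upwards [Filter.eventually_all.2 fun i => (continuousAt_const.add
      (continuous_id.inner continuous_const).continuousAt).eventually_const_lt (hpos i)]
      with y hy i using (hy i).le
  exact ⟨x, hpos, elScore_eq_zero_of_isLocalMax g hpos (hmax.isLocalMax hKx)⟩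

theorem inner_eq_of_elScore_eq {x y : E} (hx : ∀ i, 0 < 1 + ⟪x, g i⟫)
    (hy : ∀ i, 0 < 1 + ⟪y, g i⟫) (h : elScore g x = elScore g y) (i : ι) :
    ⟪x, g i⟫ = ⟪y, g i⟫ := by
  have key : ∑ i, ⟪y - x, g i⟫ ^ 2 / ((1 + ⟪x, g i⟫) * (1 + ⟪y, g i⟫)) = 0 := by
    calc _ = ⟪y - x, elScore g x⟫ - ⟪y - x, elScore g y⟫ := by
          rw [inner_elScore, inner_elScore, ← sum_sub_distrib]
          refine sum_congr rfl fun i _ => ?_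
          have := (hx i).ne'
          have := (hy i).ne'
          rw [inner_sub_left]
          field_simp
          ring
      _ = 0 := by rw [h, sub_self]
  have hterm := (sum_eq_zero_iff_of_nonneg fun i _ =>
    div_nonneg (sq_nonneg _) (mul_pos (hx i) (hy i)).le).1 key i (mem_univ i)
  rw [div_eq_zero_iff, or_iff_left (mul_pos (hx i) (hy i)).ne', sq_eq_zero_iff,
    inner_sub_left, sub_eq_zero] at hterm
  exact hterm.symm

end

/-- **Existence and uniqueness of the empirical likelihood Lagrange multiplier.**
If the zero vector lies in the interior of the convex hull of `{g₁, …, g_m}`, then there is a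
unique `λ` with `1 + ⟨λ, gᵢ⟩ > 0` for all `i` solving the score equation
`(1/m)·∑ᵢ gᵢ/(1 + ⟨λ, gᵢ⟩) = 0`. -/
theorem el_lagrange_multiplier_exists_unique
    {r m : ℕ}
    (g : Fin m → EuclideanSpace ℝ (Fin r))
    (h0 : (0 : EuclideanSpace ℝ (Fin r)) ∈ interior (convexHull ℝ (Set.range g))) :
    ∃! lam : EuclideanSpace ℝ (Fin r),
      (∀ i, 0 < 1 + ⟪lam, g i⟫) ∧
        (1 / (m : ℝ)) • ∑ i, (1 + ⟪lam, g i⟫)⁻¹ • g i = 0 := by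
  obtain ⟨ε, hε, hball⟩ := Metric.mem_nhds_iff.1 (mem_interior_iff_mem_nhds.1 h0)
  have hsep := exists_inner_le_neg_mul_norm_of_closedBall_subset_convexHull
    ((Metric.closedBall_subset_ball (half_lt_self hε)).trans hball) (half_pos hε).le
  obtain ⟨i₀, -⟩ := hsep 0
  have hscore (x) : (1 / (m : ℝ)) • elScore g x = 0 ↔ elScore g x = 0 :=
    smul_eq_zero_iff_right (one_div_ne_zero (Nat.cast_ne_zero.2 i₀.pos.ne'))
  obtain ⟨lam, hpos, hlam⟩ :=
    exists_elScore_eq_zero g (isBounded_setOf_forall_one_add_inner_nonneg (half_pos hε) hsep)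
  refine ⟨lam, ⟨hpos, (hscore lam).2 hlam⟩, fun y ⟨hy, hyS⟩ => ?_⟩
  have hinner := inner_eq_of_elScore_eq g hy hpos (((hscore y).1 hyS).trans hlam.symm)
  obtain ⟨i, hi⟩ := hsep (y - lam)
  rw [inner_sub_left, hinner i, sub_self] at hi
  have : ‖y - lam‖ ≤ 0 := nonpos_of_mul_nonpos_right (by linarith) (half_pos hε)
  exact sub_eq_zero.1 (norm_le_zero_iff.1 this)
end

section
/- Let g₁, …, g_m be vectors in ℝ^r and let λ ∈ ℝ^r, λ ≠ 0, satisfy 1 + ⟨λ, g_i⟩ > 0 for all i and (1/m)·∑_{i=1}^m g_i/(1 + ⟨λ, g_i⟩) = 0. Set ν = λ/‖λ‖, ḡ = (1/m)·∑_{i=1}^m g_i, S = (1/m)·∑_{i=1}^m g_i g_iᵀ, and Z = max_{1≤i≤m} ‖g_i‖. Then ⟨ν, ḡ⟩ ≥ 0 and ‖λ‖·(νᵀ S ν) ≤ (1 + ‖λ‖·Z)·⟨ν, ḡ⟩. -/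
open scoped RealInnerProductSpace
open Finset

/-- **Deterministic bound for the empirical likelihood Lagrange multiplier.**
If `λ ≠ 0` satisfies the positivity and score conditions, then with `ν = λ/‖λ‖`,
`ḡ = (1/m)∑ᵢ gᵢ`, `νᵀSν = (1/m)∑ᵢ ⟨ν, gᵢ⟩²` and `Z = maxᵢ ‖gᵢ‖` we have `⟨ν, ḡ⟩ ≥ 0` and
`‖λ‖·(νᵀSν) ≤ (1 + ‖λ‖·Z)·⟨ν, ḡ⟩`. -/
theorem el_lagrange_multiplier_order_bound
    {r m : ℕ} (hm : 0 < m)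
    (g : Fin m → EuclideanSpace ℝ (Fin r)) (lam : EuclideanSpace ℝ (Fin r))
    (hlam : lam ≠ 0)
    (hpos : ∀ i, 0 < 1 + ⟪lam, g i⟫)
    (hscore : (1 / (m : ℝ)) • ∑ i, (1 + ⟪lam, g i⟫)⁻¹ • g i = 0)
    (ν : EuclideanSpace ℝ (Fin r)) (hν : ν = ‖lam‖⁻¹ • lam)
    (gbar : EuclideanSpace ℝ (Fin r)) (hgbar : gbar = (1 / (m : ℝ)) • ∑ i, g i)
    (Z : ℝ)
    (hZ : Z = Finset.univ.sup' (Finset.univ_nonempty_iff.mpr (Fin.pos_iff_nonempty.mp hm)) fun i => ‖g i‖) :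
    0 ≤ ⟪ν, gbar⟫ ∧
      ‖lam‖ * ((1 / (m : ℝ)) * ∑ i, ⟪ν, g i⟫ ^ 2) ≤ (1 + ‖lam‖ * Z) * ⟪ν, gbar⟫ := by
  have hl : (0:ℝ) < ‖lam‖ := norm_pos_iff.mpr hlam
  have hm' : (0:ℝ) < (m:ℝ) := by exact_mod_cast hm
  set a : Fin m → ℝ := fun i => 1 + ⟪lam, g i⟫ with ha
  have hapos : ∀ i, 0 < a i := hpos
  have h0 : ∑ i, (a i)⁻¹ • g i = (0 : EuclideanSpace ℝ (Fin r)) := by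
    have := hscore
    rwa [smul_eq_zero_iff_right (by positivity : (1/(m:ℝ)) ≠ 0)] at this
  have hsum : ∑ i, (a i)⁻¹ * ⟪ν, g i⟫ = 0 := by
    calc ∑ i, (a i)⁻¹ * ⟪ν, g i⟫ = ⟪ν, ∑ i, (a i)⁻¹ • g i⟫ := by
          rw [inner_sum]; simp_rw [real_inner_smul_right]
      _ = 0 := by rw [h0, inner_zero_right]
  have hnu : ∀ i, ⟪lam, g i⟫ = ‖lam‖ * ⟪ν, g i⟫ := by
    intro i
    rw [hν, real_inner_smul_left]
    field_simp
  have hgb : ⟪ν, gbar⟫ = (1/(m:ℝ)) * ∑ i, ‖lam‖ * ⟪ν, g i⟫^2 / a i := by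
    rw [hgbar, real_inner_smul_right, inner_sum]
    congr 1
    have : ∑ i, ⟪ν, g i⟫ = ∑ i, (⟪ν, g i⟫ - (a i)⁻¹ * ⟪ν, g i⟫) := by
      rw [Finset.sum_sub_distrib, hsum, sub_zero]
    rw [this]
    refine Finset.sum_congr rfl fun i _ => ?_
    have hai := (hapos i).ne'
    have hd : a i = 1 + ‖lam‖ * ⟪ν, g i⟫ := by rw [ha]; simp [hnu i]
    have hinv : (a i)⁻¹ * a i = 1 := inv_mul_cancel₀ hai
    rw [eq_div_iff hai]
    linear_combination (⟪ν, g i⟫ : ℝ) * hd - (⟪ν, g i⟫ : ℝ) * hinv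
  have hZi : ∀ i, a i ≤ 1 + ‖lam‖ * Z := by
    intro i
    have h1 : ⟪lam, g i⟫ ≤ ‖lam‖ * ‖g i‖ := real_inner_le_norm lam (g i)
    have h2 : ‖g i‖ ≤ Z := by
      rw [hZ]; exact Finset.le_sup' (fun i => ‖g i‖) (Finset.mem_univ i)
    have := mul_le_mul_of_nonneg_left h2 hl.le
    simp only [ha]; linarith
  have hnn : 0 ≤ ⟪ν, gbar⟫ := by
    rw [hgb]
    apply mul_nonneg (by positivity)
    apply Finset.sum_nonneg
    intro i _
    have := hapos i
    positivity
  refine ⟨hnn, ?_⟩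
  rw [hgb]
  have key : ∑ i, ‖lam‖ * ⟪ν, g i⟫^2 ≤ (1 + ‖lam‖ * Z) * ∑ i, ‖lam‖ * ⟪ν, g i⟫^2 / a i := by
    rw [Finset.mul_sum]
    refine Finset.sum_le_sum fun i _ => ?_
    have hai := hapos i
    have hdnn : 0 ≤ ‖lam‖ * ⟪ν, g i⟫ ^ 2 / a i := by positivity
    calc ‖lam‖ * ⟪ν, g i⟫ ^ 2
        = (‖lam‖ * ⟪ν, g i⟫ ^ 2 / a i) * a i := (div_mul_cancel₀ _ hai.ne').symm
      _ ≤ (‖lam‖ * ⟪ν, g i⟫ ^ 2 / a i) * (1 + ‖lam‖ * Z) :=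
          mul_le_mul_of_nonneg_left (hZi i) hdnn
      _ = (1 + ‖lam‖ * Z) * (‖lam‖ * ⟪ν, g i⟫ ^ 2 / a i) := mul_comm _ _
  calc ‖lam‖ * ((1/(m:ℝ)) * ∑ i, ⟪ν, g i⟫ ^ 2)
      = (1/(m:ℝ)) * ∑ i, ‖lam‖ * ⟪ν, g i⟫ ^ 2 := by
        rw [← mul_assoc, mul_comm ‖lam‖ (1/(m:ℝ)), mul_assoc, Finset.mul_sum]
    _ ≤ (1/(m:ℝ)) * ((1 + ‖lam‖ * Z) * ∑ i, ‖lam‖ * ⟪ν, g i⟫^2 / a i) :=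
        mul_le_mul_of_nonneg_left key (by positivity)
    _ = (1 + ‖lam‖ * Z) * ((1/(m:ℝ)) * ∑ i, ‖lam‖ * ⟪ν, g i⟫ ^ 2 / a i) := by ring
end
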